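/- arXiv:2601.12210 — 2 statements merged into one kernel-verified Lean document; each statement's English description precedes it below -/
import Mathlib

section
/- Fix T > 0 and let z(τ,T) = C e^{Aτ}(I - e^{AT})^{-1}B for the cascade system. The equation ∂z/∂τ(τ,T) = C e^{Aτ}(I-e^{AT})^{-1}AB = 0 has exactly two roots τ₁, τ₂ in (0,T) with τ₁ < τ₂; z(·,T) is decreasing on (0,τ₁) and (τ₂,T) and increasing on (τ₁,τ₂), so τ₁ is the point of minimum and τ₂ the point of maximum of z(·,T) on [0,T]. -/
/-!
Conjugating `A` to `diag(-a₁, -a₂, -a₃)` turns every function of `A` into a diagonal matrix, and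
the `(3, 1)` entry of `P diag(f(-a₁), f(-a₂), f(-a₃)) P⁻¹` is `g₁ g₂` times the second divided
difference `f[-a₁, -a₂, -a₃]`. Hence, with divided differences taken in `μ`,
`z(τ) = g₁ g₂ [e^{τμ} / (1 - e^{Tμ})]` and `∂z/∂τ = g₁ g₂ [e^{τμ} μ / (1 - e^{Tμ})]`.
Divided differences kill affine functions, which gives `z(0) = z(T)` and `z'(0) = z'(T)`, and
strict concavity of `μ ↦ μ / (1 - e^{Tμ})` on `μ < 0` gives `z'(0) < 0`.
As an exponential sum with three distinct exponents, `z'` has at most two zeros (Rolle).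
Since `z(0) = z(T)`, `z'` cannot stay `≤ 0` on `(0, T)`, so it changes sign exactly twice there,
with sign pattern `-, +, -`.
-/

open Matrix Set Filter

noncomputable def Acas (a₁ a₂ a₃ g₁ g₂ : ℝ) : Matrix (Fin 3) (Fin 3) ℝ :=
  !![-a₁, 0, 0; g₁, -a₂, 0; 0, g₂, -a₃]

def Bcas : Fin 3 → ℝ := ![1, 0, 0]

/-- impulse response g(t) = C e^{tA} B with C = (0,0,1) -/
noncomputable def impResp (a₁ a₂ a₃ g₁ g₂ : ℝ) (t : ℝ) : ℝ :=
  ((NormedSpace.exp (t • Acas a₁ a₂ a₃ g₁ g₂)) *ᵥ Bcas) 2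

/-- z(τ,T) = C e^{Aτ} (I - e^{AT})⁻¹ B -/
noncomputable def zfun (a₁ a₂ a₃ g₁ g₂ : ℝ) (τ T : ℝ) : ℝ :=
  ((NormedSpace.exp (τ • Acas a₁ a₂ a₃ g₁ g₂) *
    (1 - NormedSpace.exp (T • Acas a₁ a₂ a₃ g₁ g₂))⁻¹) *ᵥ Bcas) 2

noncomputable def zmaxF (a₁ a₂ a₃ g₁ g₂ T : ℝ) : ℝ :=
  sSup ((fun τ => zfun a₁ a₂ a₃ g₁ g₂ τ T) '' Set.Icc 0 T)

noncomputable def zminF (a₁ a₂ a₃ g₁ g₂ T : ℝ) : ℝ :=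
  sInf ((fun τ => zfun a₁ a₂ a₃ g₁ g₂ τ T) '' Set.Icc 0 T)

section ConjDiagonal

variable {n : Type*} [Fintype n] [DecidableEq n]

theorem conj_diagonal_mul_conj_diagonal {R : Type*} [CommRing R] {P Q : Matrix n n R}
    (hQP : Q * P = 1) (v w : n → R) :
    P * Matrix.diagonal v * Q * (P * Matrix.diagonal w * Q) = P * Matrix.diagonal (v * w) * Q := by
  calc P * Matrix.diagonal v * Q * (P * Matrix.diagonal w * Q)
      = P * Matrix.diagonal v * (Q * P) * Matrix.diagonal w * Q := by simp only [Matrix.mul_assoc]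
    _ = P * Matrix.diagonal (v * w) * Q := by
      rw [hQP, Matrix.mul_one, Matrix.mul_assoc P, diagonal_mul_diagonal]; rfl

theorem one_sub_conj_diagonal {R : Type*} [CommRing R] {P Q : Matrix n n R}
    (hPQ : P * Q = 1) (v : n → R) :
    1 - P * Matrix.diagonal v * Q = P * Matrix.diagonal (1 - v) * Q := by
  have hdiag : Matrix.diagonal (1 - v) = 1 - Matrix.diagonal v := by
    rw [← diagonal_one', diagonal_sub]; rfl
  rw [hdiag, Matrix.mul_sub, Matrix.sub_mul, Matrix.mul_one, hPQ]

theorem inv_conj_diagonal {K : Type*} [Field K] {P Q : Matrix n n K}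
    (hPQ : P * Q = 1) (hQP : Q * P = 1) {v : n → K} (hv : ∀ i, v i ≠ 0) :
    (P * Matrix.diagonal v * Q)⁻¹ = P * Matrix.diagonal v⁻¹ * Q := by
  refine inv_eq_right_inv ?_
  have : v * v⁻¹ = 1 := funext fun i => mul_inv_cancel₀ (hv i)
  rw [conj_diagonal_mul_conj_diagonal hQP, this, diagonal_one', Matrix.mul_one, hPQ]

theorem exp_smul_conj_diagonal {P Q : Matrix n n ℝ} (hPQ : P * Q = 1) (hQP : Q * P = 1)
    (t : ℝ) (v : n → ℝ) :
    NormedSpace.exp (t • (P * Matrix.diagonal v * Q)) =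
      P * Matrix.diagonal (fun i => Real.exp (t * v i)) * Q := by
  let U : (Matrix n n ℝ)ˣ := ⟨P, Q, hPQ, hQP⟩
  have hconj := Matrix.exp_units_conj U (Matrix.diagonal (t • v))
  rw [Matrix.exp_diagonal, Pi.exp_def] at hconj
  simpa [U, Matrix.mul_smul, Matrix.smul_mul, Real.exp_eq_exp_ℝ] using hconj

end ConjDiagonal

noncomputable def divDiff2 (f : ℝ → ℝ) (x y z : ℝ) : ℝ :=
  f x / ((x - y) * (x - z)) + f y / ((y - x) * (y - z)) + f z / ((z - x) * (z - y))

section DivDiff2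

variable {f g : ℝ → ℝ} {x y z : ℝ}

theorem divDiff2_swap_left : divDiff2 f x y z = divDiff2 f y x z := by
  unfold divDiff2; ring

theorem divDiff2_swap_right : divDiff2 f x y z = divDiff2 f x z y := by
  unfold divDiff2; ring

theorem divDiff2_eq_div_sub_slopes (hxy : x ≠ y) (hxz : x ≠ z) (hyz : y ≠ z) :
    divDiff2 f x y z = ((f z - f y) / (z - y) - (f y - f x) / (y - x)) / (z - x) := by
  unfold divDiff2
  field_simp
  ring

theorem StrictConcaveOn.divDiff2_neg {s : Set ℝ} (hf : StrictConcaveOn ℝ s f)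
    (hx : x ∈ s) (hy : y ∈ s) (hz : z ∈ s) (hxy : x ≠ y) (hxz : x ≠ z) (hyz : y ≠ z) :
    divDiff2 f x y z < 0 := by
  wlog hlt : x < y generalizing x y
  · rw [divDiff2_swap_left]
    exact this hy hx hxy.symm hyz hxz (lt_of_le_of_ne (not_lt.1 hlt) hxy.symm)
  wlog hlt' : y < z generalizing x y z
  · have hzy : z < y := lt_of_le_of_ne (not_lt.1 hlt') hyz.symm
    rcases lt_or_gt_of_ne hxz with hxz' | hzx
    · rw [divDiff2_swap_right]
      exact this hy hx hz hxz hxy hyz.symm hxz' hzy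
    · rw [divDiff2_swap_right, divDiff2_swap_left]
      exact this hy hz hx hxz.symm hyz.symm hxy hzx hlt
  rw [divDiff2_eq_div_sub_slopes hxy hxz hyz]
  exact div_neg_of_neg_of_pos (sub_neg.2 (hf.slope_anti_adjacent hx hz hlt hlt'))
    (sub_pos.2 (hlt.trans hlt'))

theorem divDiff2_eq_of_eq_add_affine {c d : ℝ} (hxy : x ≠ y) (hxz : x ≠ z) (hyz : y ≠ z)
    (hfx : f x = g x + (c * x + d)) (hfy : f y = g y + (c * y + d))
    (hfz : f z = g z + (c * z + d)) :
    divDiff2 f x y z = divDiff2 g x y z := by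
  unfold divDiff2
  rw [hfx, hfy, hfz]
  field_simp
  ring

theorem hasDerivAt_divDiff2 {F F' : ℝ → ℝ → ℝ} {τ : ℝ}
    (hF : ∀ μ, HasDerivAt (fun τ => F τ μ) (F' τ μ) τ) :
    HasDerivAt (fun τ => divDiff2 (F τ) x y z) (divDiff2 (F' τ) x y z) τ :=
  (((hF x).div_const _).add ((hF y).div_const _)).add ((hF z).div_const _)

end DivDiff2

theorem hasDerivAt_sum_mul_exp {ι : Type*} [Fintype ι] (c μ : ι → ℝ) (t : ℝ) :
    HasDerivAt (fun t => ∑ i, c i * Real.exp (μ i * t)) (∑ i, c i * μ i * Real.exp (μ i * t)) t :=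
  (HasDerivAt.fun_sum fun i _ =>
    (((hasDerivAt_id' t).const_mul (μ i)).exp).const_mul (c i)).congr_deriv
      (Finset.sum_congr rfl fun i _ => by ring)

theorem eq_zero_of_sum_mul_exp_eq_zero {n : ℕ} {μ : Fin (n + 1) → ℝ}
    (hμ : Function.Injective μ) {c x : Fin (n + 1) → ℝ} (hx : StrictMono x)
    (h : ∀ k, ∑ i, c i * Real.exp (μ i * x k) = 0) : c = 0 := by
  induction n with
  | zero =>
    funext i
    fin_cases i
    simpa [Real.exp_ne_zero] using h 0
  | succ n ih =>
    -- Rolle between consecutive zeros of `e^{-μ_last t} · (the sum)` yields `n + 1` zeros of its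
    -- derivative, an exponential sum with the `n + 1` exponents `μ i - μ_last`.
    set ν : Fin (n + 1) → ℝ := fun i => μ i.castSucc - μ (Fin.last _)
    set g : ℝ → ℝ := fun t => ∑ i, c i * Real.exp ((μ i - μ (Fin.last _)) * t)
    have hg : ∀ t, g t = Real.exp (-(μ (Fin.last _) * t)) * ∑ i, c i * Real.exp (μ i * t) := by
      intro t
      rw [Finset.mul_sum]
      refine Finset.sum_congr rfl fun i _ => ?_
      rw [mul_left_comm, ← Real.exp_add]
      ring_nf
    have hg' : ∀ t, HasDerivAt g (∑ i, c i.castSucc * ν i * Real.exp (ν i * t)) t := fun t =>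
      (hasDerivAt_sum_mul_exp c (fun i => μ i - μ (Fin.last _)) t).congr_deriv <| by
        rw [Fin.sum_univ_castSucc, sub_self, mul_zero, zero_mul, add_zero]
    have hrolle : ∀ k : Fin (n + 1), ∃ y ∈ Set.Ioo (x k.castSucc) (x k.succ),
        ∑ i, c i.castSucc * ν i * Real.exp (ν i * y) = 0 := fun k =>
      exists_hasDerivAt_eq_zero (hx k.castSucc_lt_succ)
        (HasDerivAt.continuousOn fun t _ => hg' t)
        (by rw [hg, hg, h, h, mul_zero, mul_zero]) fun t _ => hg' t
    choose y hy hy0 using hrolle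
    have hy_mono : StrictMono y := Fin.strictMono_iff_lt_succ.2 fun k =>
      ((hy k.castSucc).2.trans_le (by rw [Fin.succ_castSucc])).trans (hy k.succ).1
    have hν : Function.Injective ν := sub_left_injective.comp (hμ.comp (Fin.castSucc_injective _))
    have hcν := ih hν hy_mono hy0
    have hc : ∀ i : Fin (n + 1), c i.castSucc = 0 := fun i =>
      (mul_eq_zero.1 (congrFun hcν i)).resolve_right
        (sub_ne_zero.2 (hμ.ne (Fin.castSucc_lt_last i).ne))
    have hlast : c (Fin.last _) = 0 := by
      simpa [Fin.sum_univ_castSucc, hc, Real.exp_ne_zero] using h 0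
    funext i
    induction i using Fin.lastCases with
    | last => exact hlast
    | cast i => exact hc i

theorem divDiff2_exp_mul_eq_zero_of_three_zeros {h : ℝ → ℝ} {x y z : ℝ} (hxy : x ≠ y)
    (hxz : x ≠ z) (hyz : y ≠ z) {p q r : ℝ} (hpq : p < q) (hqr : q < r)
    (hp : divDiff2 (fun μ => Real.exp (p * μ) * h μ) x y z = 0)
    (hq : divDiff2 (fun μ => Real.exp (q * μ) * h μ) x y z = 0)
    (hr : divDiff2 (fun μ => Real.exp (r * μ) * h μ) x y z = 0) (τ : ℝ) :
    divDiff2 (fun μ => Real.exp (τ * μ) * h μ) x y z = 0 := by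
  have hsum : ∀ τ, divDiff2 (fun μ => Real.exp (τ * μ) * h μ) x y z =
      ∑ i, ![h x / ((x - y) * (x - z)), h y / ((y - x) * (y - z)),
        h z / ((z - x) * (z - y))] i * Real.exp (![x, y, z] i * τ) := fun τ => by
    simp [divDiff2, Fin.sum_univ_three, mul_comm τ]
    ring
  have hinj : Function.Injective ![x, y, z] := by
    intro i j hij
    fin_cases i <;> fin_cases j <;> simp_all [eq_comm]
  have hmono : StrictMono ![p, q, r] := Fin.strictMono_iff_lt_succ.2 fun i => by
    fin_cases i
    exacts [hpq, hqr]
  have hc := eq_zero_of_sum_mul_exp_eq_zero hinj hmono fun k => by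
    fin_cases k
    exacts [(hsum p).symm.trans hp, (hsum q).symm.trans hq, (hsum r).symm.trans hr]
  rw [hsum, hc]
  simp

theorem mul_one_add_exp_add_two_mul_one_sub_exp_neg {u : ℝ} (hu : u < 0) :
    u * (1 + Real.exp u) + 2 * (1 - Real.exp u) < 0 := by
  let k : ℝ → ℝ := fun u => u * (1 + Real.exp u) + 2 * (1 - Real.exp u)
  have hk : ∀ v, HasDerivAt k (1 - Real.exp v + v * Real.exp v) v := fun v => by
    have := ((hasDerivAt_id' v).mul ((Real.hasDerivAt_exp v).const_add 1)).add
      (((Real.hasDerivAt_exp v).const_sub 1).const_mul 2)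
    exact this.congr_deriv (by ring)
  have hk' : ∀ v < 0, 0 < 1 - Real.exp v + v * Real.exp v := fun v hv => by
    -- `e^{-v} > 1 - v` after dividing by `e^v`
    have h := Real.add_one_lt_exp (neg_ne_zero.2 hv.ne)
    have : 1 - Real.exp v + v * Real.exp v = Real.exp v * (Real.exp (-v) - (-v + 1)) := by
      rw [mul_sub, ← Real.exp_add, add_neg_cancel, Real.exp_zero]; ring
    rw [this]
    exact mul_pos (Real.exp_pos v) (sub_pos.2 h)
  have hmono : StrictMonoOn k (Set.Iic 0) :=
    strictMonoOn_of_deriv_pos (convex_Iic 0) (HasDerivAt.continuousOn fun v _ => hk v)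
      fun v hv => by
        rw [interior_Iic] at hv
        rw [(hk v).deriv]
        exact hk' v hv
  simpa [k] using hmono hu.le (Set.mem_Iic.2 le_rfl) hu

theorem strictConcaveOn_div_one_sub_exp {T : ℝ} (hT : 0 < T) :
    StrictConcaveOn ℝ (Set.Iio 0) fun μ => μ / (1 - Real.exp (T * μ)) := by
  have hE : ∀ μ, HasDerivAt (fun μ => Real.exp (T * μ)) (Real.exp (T * μ) * T) μ := fun μ =>
    ((hasDerivAt_id' μ).const_mul T).exp.congr_deriv (by ring)
  have hD : ∀ μ < 0, 0 < 1 - Real.exp (T * μ) := fun μ hμ =>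
    sub_pos.2 (Real.exp_lt_one_iff.2 (mul_neg_of_pos_of_neg hT hμ))
  set G₁ : ℝ → ℝ := fun μ =>
    (1 - Real.exp (T * μ) + T * μ * Real.exp (T * μ)) / (1 - Real.exp (T * μ)) ^ 2
  have hG : ∀ μ < 0, HasDerivAt (fun μ => μ / (1 - Real.exp (T * μ))) (G₁ μ) μ := fun μ hμ => by
    refine ((hasDerivAt_id' μ).fun_div ((hE μ).const_sub 1) (hD μ hμ).ne').congr_deriv ?_
    have := (hD μ hμ).ne'
    simp only [G₁]
    field_simp
    ring
  have hG₁ : ∀ μ < 0, HasDerivAt G₁ (T * Real.exp (T * μ) *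
      (T * μ * (1 + Real.exp (T * μ)) + 2 * (1 - Real.exp (T * μ))) /
        (1 - Real.exp (T * μ)) ^ 3) μ := fun μ hμ => by
    have hN := (((hE μ).const_sub 1).fun_add (((hasDerivAt_id' μ).const_mul T).fun_mul (hE μ)))
    refine (hN.fun_div (((hE μ).const_sub 1).fun_pow 2)
      (pow_ne_zero 2 (hD μ hμ).ne')).congr_deriv ?_
    have := (hD μ hμ).ne'
    field_simp
    ring
  have hanti : StrictAntiOn G₁ (Set.Iio 0) :=
    strictAntiOn_of_deriv_neg (convex_Iio 0)
      (fun μ hμ => (hG₁ μ hμ).continuousAt.continuousWithinAt) fun μ hμ => by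
        rw [interior_Iio] at hμ
        rw [(hG₁ μ hμ).deriv]
        have := hD μ hμ
        exact div_neg_of_neg_of_pos
          (mul_neg_of_pos_of_neg (by positivity)
            (mul_one_add_exp_add_two_mul_one_sub_exp_neg (mul_neg_of_pos_of_neg hT hμ)))
          (by positivity)
  refine StrictAntiOn.strictConcaveOn_of_deriv (convex_Iio 0)
    (fun μ hμ => (hG μ hμ).continuousAt.continuousWithinAt) ?_
  rw [interior_Iio]
  exact hanti.congr fun μ hμ => ((hG μ hμ).deriv).symm

theorem IsPreconnected.neg_of_ne_zero {α : Type*} [TopologicalSpace α] {s : Set α}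
    {g : α → ℝ} (hs : IsPreconnected s) (hg : ContinuousOn g s) (hne : ∀ t ∈ s, g t ≠ 0)
    {p : α} (hp : p ∈ s) (hgp : g p < 0) {t : α} (ht : t ∈ s) : g t < 0 := by
  by_contra hpos
  obtain ⟨u, hu, hu0⟩ := hs.intermediate_value hp ht hg ⟨hgp.le, not_lt.1 hpos⟩
  exact hne u hu hu0

theorem isMinOn_isMaxOn_of_antitoneOn_monotoneOn_antitoneOn {f : ℝ → ℝ} {a τ₁ τ₂ b : ℝ}
    (ha : a ≤ τ₁) (hτ : τ₁ ≤ τ₂) (hb : τ₂ ≤ b) (hfab : f a = f b)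
    (h₁ : AntitoneOn f (Set.Icc a τ₁)) (h₂ : MonotoneOn f (Set.Icc τ₁ τ₂))
    (h₃ : AntitoneOn f (Set.Icc τ₂ b)) :
    IsMinOn f (Set.Icc a b) τ₁ ∧ IsMaxOn f (Set.Icc a b) τ₂ := by
  have hfa : f τ₁ ≤ f a := h₁ ⟨le_rfl, ha⟩ ⟨ha, le_rfl⟩ ha
  have hfb : f b ≤ f τ₂ := h₃ ⟨le_rfl, hb⟩ ⟨hb, le_rfl⟩ hb
  refine ⟨isMinOn_iff.2 fun x ⟨hax, hxb⟩ => ?_, isMaxOn_iff.2 fun x ⟨hax, hxb⟩ => ?_⟩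
  · rcases le_total x τ₁ with hx | hx
    · exact h₁ ⟨hax, hx⟩ ⟨ha, le_rfl⟩ hx
    rcases le_total x τ₂ with hx' | hx'
    · exact h₂ ⟨le_rfl, hτ⟩ ⟨hx, hx'⟩ hx
    · linarith [h₃ ⟨hx', hxb⟩ ⟨hb, le_rfl⟩ hxb]
  · rcases le_total x τ₁ with hx | hx
    · linarith [h₁ ⟨le_rfl, ha⟩ ⟨hax, hx⟩ hax]
    rcases le_total x τ₂ with hx' | hx'
    · exact h₂ ⟨hx, hx'⟩ ⟨hτ, le_rfl⟩ hx'
    · exact h₃ ⟨le_rfl, hb⟩ ⟨hx', hxb⟩ hx'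

theorem exists_deriv_pos_of_eq {f g : ℝ → ℝ} {a b : ℝ} (hab : a < b)
    (hf : ∀ t, HasDerivAt f (g t) t) (hfab : f a = f b)
    (hg3 : ∀ p q r, a < p → p < q → q < r → r < b → g p = 0 → g q = 0 → g r ≠ 0) :
    ∃ s ∈ Set.Ioo a b, 0 < g s := by
  by_contra! hle
  have hanti : AntitoneOn f (Set.Icc a b) :=
    antitoneOn_of_deriv_nonpos (convex_Icc a b) (HasDerivAt.continuousOn fun t _ => hf t)
      (fun t _ => (hf t).differentiableAt.differentiableWithinAt) fun t ht => by
        rw [interior_Icc] at ht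
        rw [(hf t).deriv]
        exact hle t ht
  have hconst : ∀ t ∈ Set.Icc a b, f t = f a := fun t ht =>
    le_antisymm (hanti ⟨le_rfl, hab.le⟩ ht ht.1)
      (hfab ▸ hanti ht ⟨hab.le, le_rfl⟩ ht.2)
  have hzero : ∀ t ∈ Set.Ioo a b, g t = 0 := fun t ht => by
    have hev : f =ᶠ[nhds t] fun _ => f a :=
      Filter.eventuallyEq_of_mem (isOpen_Ioo.mem_nhds ht) fun u hu =>
        hconst u (Set.Ioo_subset_Icc_self hu)
    rw [← (hf t).deriv, hev.deriv_eq, deriv_const]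
  have h₁ : a < (3 * a + b) / 4 := by linarith
  have h₂ : (3 * a + b) / 4 < (a + b) / 2 := by linarith
  have h₃ : (a + b) / 2 < (a + 3 * b) / 4 := by linarith
  have h₄ : (a + 3 * b) / 4 < b := by linarith
  exact hg3 _ _ _ h₁ h₂ h₃ h₄ (hzero _ ⟨h₁, by linarith⟩) (hzero _ ⟨by linarith, by linarith⟩)
    (hzero _ ⟨by linarith, h₄⟩)

theorem exists_zeros_neg_pos_neg {g : ℝ → ℝ} {a b s : ℝ} (hg : Continuous g)
    (hs : s ∈ Set.Ioo a b) (hga : g a < 0) (hgs : 0 < g s) (hgb : g b < 0)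
    (hg3 : ∀ p q r, a < p → p < q → q < r → r < b → g p = 0 → g q = 0 → g r ≠ 0) :
    ∃ τ₁ τ₂, a < τ₁ ∧ τ₁ < τ₂ ∧ τ₂ < b ∧ {t | t ∈ Set.Ioo a b ∧ g t = 0} = {τ₁, τ₂} ∧
      (∀ t ∈ Set.Ioo a τ₁, g t < 0) ∧ (∀ t ∈ Set.Ioo τ₁ τ₂, 0 < g t) ∧
      ∀ t ∈ Set.Ioo τ₂ b, g t < 0 := by
  obtain ⟨τ₁, hτ₁, hgτ₁⟩ := intermediate_value_Ioo hs.1.le hg.continuousOn ⟨hga, hgs⟩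
  obtain ⟨τ₂, hτ₂, hgτ₂⟩ := intermediate_value_Ioo' hs.2.le hg.continuousOn ⟨hgb, hgs⟩
  have hτ : τ₁ < τ₂ := hτ₁.2.trans hτ₂.1
  have hzeros : ∀ t ∈ Set.Ioo a b, g t = 0 → t = τ₁ ∨ t = τ₂ := by
    intro t ht hgt
    by_contra! hne
    rcases lt_trichotomy t τ₁ with h | h | h
    · exact hg3 t τ₁ τ₂ ht.1 h hτ hτ₂.2 hgt hgτ₁ hgτ₂
    · exact hne.1 h
    rcases lt_trichotomy t τ₂ with h' | h' | h'
    · exact hg3 τ₁ t τ₂ hτ₁.1 h h' hτ₂.2 hgτ₁ hgt hgτ₂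
    · exact hne.2 h'
    · exact hg3 τ₁ τ₂ t hτ₁.1 hτ h' ht.2 hgτ₁ hgτ₂ hgt
  have hne : ∀ t ∈ Set.Icc a b, t ≠ τ₁ → t ≠ τ₂ → g t ≠ 0 := by
    rintro t ⟨hat, htb⟩ h₁ h₂ hgt
    rcases hat.eq_or_lt with rfl | hat
    · exact hga.ne hgt
    rcases htb.eq_or_lt with rfl | htb
    · exact hgb.ne hgt
    exact (hzeros t ⟨hat, htb⟩ hgt).elim h₁ h₂
  refine ⟨τ₁, τ₂, hτ₁.1, hτ, hτ₂.2, ?_, fun t ht => ?_, fun t ht => ?_, fun t ht => ?_⟩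
  · ext t
    refine ⟨fun ⟨ht, hgt⟩ => hzeros t ht hgt, ?_⟩
    rintro (rfl | rfl)
    exacts [⟨⟨hτ₁.1, hτ.trans hτ₂.2⟩, hgτ₁⟩, ⟨⟨hτ₁.1.trans hτ, hτ₂.2⟩, hgτ₂⟩]
  · exact isPreconnected_Ico.neg_of_ne_zero hg.continuousOn
      (fun u hu => hne u ⟨hu.1, hu.2.le.trans (hτ.trans hτ₂.2).le⟩ hu.2.ne (hu.2.trans hτ).ne)
      (Set.left_mem_Ico.2 hτ₁.1) hga (Set.Ioo_subset_Ico_self ht)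
  · exact neg_neg_iff_pos.1 <| isPreconnected_Ioo.neg_of_ne_zero hg.neg.continuousOn
      (fun u hu => neg_ne_zero.2 (hne u ⟨hτ₁.1.le.trans hu.1.le, hu.2.le.trans hτ₂.2.le⟩
        hu.1.ne' hu.2.ne)) ⟨hτ₁.2, hτ₂.1⟩ (neg_neg_iff_pos.2 hgs) ht
  · exact isPreconnected_Ioc.neg_of_ne_zero hg.continuousOn
      (fun u hu => hne u ⟨(hτ₁.1.trans hτ).le.trans hu.1.le, hu.2⟩ (hτ.trans hu.1).ne' hu.1.ne')
      (Set.right_mem_Ioc.2 hτ₂.2) hgb (Set.Ioo_subset_Ioc_self ht)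

theorem exists_two_critical_points_of_eq {f g : ℝ → ℝ} {a b : ℝ} (hab : a < b)
    (hf : ∀ t, HasDerivAt f (g t) t) (hg : Continuous g) (hfab : f a = f b)
    (hga : g a < 0) (hgb : g b < 0)
    (hg3 : ∀ p q r, a < p → p < q → q < r → r < b → g p = 0 → g q = 0 → g r ≠ 0) :
    ∃ τ₁ τ₂, a < τ₁ ∧ τ₁ < τ₂ ∧ τ₂ < b ∧ {t | t ∈ Set.Ioo a b ∧ g t = 0} = {τ₁, τ₂} ∧
      StrictAntiOn f (Set.Icc a τ₁) ∧ StrictMonoOn f (Set.Icc τ₁ τ₂) ∧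
      StrictAntiOn f (Set.Icc τ₂ b) ∧ IsMinOn f (Set.Icc a b) τ₁ ∧
      IsMaxOn f (Set.Icc a b) τ₂ := by
  obtain ⟨s, hs, hgs⟩ := exists_deriv_pos_of_eq hab hf hfab hg3
  obtain ⟨τ₁, τ₂, hτ₁, hτ, hτ₂, hzeros, hneg₁, hpos, hneg₂⟩ :=
    exists_zeros_neg_pos_neg hg hs hga hgs hgb hg3
  have hfc : Continuous f := continuous_iff_continuousAt.2 fun t => (hf t).continuousAt
  have hanti₁ : StrictAntiOn f (Set.Icc a τ₁) :=
    strictAntiOn_of_deriv_neg (convex_Icc _ _) hfc.continuousOn fun t ht => by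
      rw [interior_Icc] at ht; rw [(hf t).deriv]; exact hneg₁ t ht
  have hmono : StrictMonoOn f (Set.Icc τ₁ τ₂) :=
    strictMonoOn_of_deriv_pos (convex_Icc _ _) hfc.continuousOn fun t ht => by
      rw [interior_Icc] at ht; rw [(hf t).deriv]; exact hpos t ht
  have hanti₂ : StrictAntiOn f (Set.Icc τ₂ b) :=
    strictAntiOn_of_deriv_neg (convex_Icc _ _) hfc.continuousOn fun t ht => by
      rw [interior_Icc] at ht; rw [(hf t).deriv]; exact hneg₂ t ht
  exact ⟨τ₁, τ₂, hτ₁, hτ, hτ₂, hzeros, hanti₁, hmono, hanti₂,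
    isMinOn_isMaxOn_of_antitoneOn_monotoneOn_antitoneOn hτ₁.le hτ.le hτ₂.le hfab
      hanti₁.antitoneOn hmono.monotoneOn hanti₂.antitoneOn⟩

-- The columns are eigenvectors of `Acas` for the eigenvalues `-a₁, -a₂, -a₃`.
noncomputable def cascadeEigvecs (a₁ a₂ a₃ g₁ g₂ : ℝ) : Matrix (Fin 3) (Fin 3) ℝ :=
  !![1, 0, 0; g₁ / (a₂ - a₁), 1, 0; g₁ * g₂ / ((a₂ - a₁) * (a₃ - a₁)), g₂ / (a₃ - a₂), 1]

noncomputable def cascadeEigvecsInv (a₁ a₂ a₃ g₁ g₂ : ℝ) : Matrix (Fin 3) (Fin 3) ℝ :=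
  !![1, 0, 0; -(g₁ / (a₂ - a₁)), 1, 0; g₁ * g₂ / ((a₃ - a₁) * (a₃ - a₂)), -(g₂ / (a₃ - a₂)), 1]

noncomputable def cascadeFunCalc (a₁ a₂ a₃ g₁ g₂ : ℝ) (f : ℝ → ℝ) : Matrix (Fin 3) (Fin 3) ℝ :=
  cascadeEigvecs a₁ a₂ a₃ g₁ g₂ * Matrix.diagonal (fun i => f (![-a₁, -a₂, -a₃] i)) *
    cascadeEigvecsInv a₁ a₂ a₃ g₁ g₂

section Cascade

variable {a₁ a₂ a₃ : ℝ} (g₁ g₂ : ℝ)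

theorem cascadeEigvecs_mul_inv (h₁₂ : a₁ ≠ a₂) (h₁₃ : a₁ ≠ a₃) (h₂₃ : a₂ ≠ a₃) :
    cascadeEigvecs a₁ a₂ a₃ g₁ g₂ * cascadeEigvecsInv a₁ a₂ a₃ g₁ g₂ = 1 := by
  ext i j
  fin_cases i <;> fin_cases j <;>
    simp [cascadeEigvecs, cascadeEigvecsInv, Matrix.mul_apply, Fin.sum_univ_three]
  field_simp
  ring

theorem cascadeEigvecsInv_mul (h₁₂ : a₁ ≠ a₂) (h₁₃ : a₁ ≠ a₃) (h₂₃ : a₂ ≠ a₃) :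
    cascadeEigvecsInv a₁ a₂ a₃ g₁ g₂ * cascadeEigvecs a₁ a₂ a₃ g₁ g₂ = 1 := by
  ext i j
  fin_cases i <;> fin_cases j <;>
    simp [cascadeEigvecs, cascadeEigvecsInv, Matrix.mul_apply, Fin.sum_univ_three]
  field_simp
  ring

theorem cascadeFunCalc_mul (h₁₂ : a₁ ≠ a₂) (h₁₃ : a₁ ≠ a₃) (h₂₃ : a₂ ≠ a₃) (f h : ℝ → ℝ) :
    cascadeFunCalc a₁ a₂ a₃ g₁ g₂ f * cascadeFunCalc a₁ a₂ a₃ g₁ g₂ h =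
      cascadeFunCalc a₁ a₂ a₃ g₁ g₂ fun μ => f μ * h μ :=
  conj_diagonal_mul_conj_diagonal (cascadeEigvecsInv_mul g₁ g₂ h₁₂ h₁₃ h₂₃) _ _

theorem Acas_eq_cascadeFunCalc (h₁₂ : a₁ ≠ a₂) (h₁₃ : a₁ ≠ a₃) (h₂₃ : a₂ ≠ a₃) :
    Acas a₁ a₂ a₃ g₁ g₂ = cascadeFunCalc a₁ a₂ a₃ g₁ g₂ fun μ => μ := by
  rw [Acas, cascadeFunCalc, cascadeEigvecs, cascadeEigvecsInv, Matrix.diagonal_fin_three,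
    Matrix.mul_fin_three, Matrix.mul_fin_three]
  ext i j
  fin_cases i <;> fin_cases j <;> simp <;> field_simp <;> ring

theorem exp_smul_Acas (h₁₂ : a₁ ≠ a₂) (h₁₃ : a₁ ≠ a₃) (h₂₃ : a₂ ≠ a₃) (t : ℝ) :
    NormedSpace.exp (t • Acas a₁ a₂ a₃ g₁ g₂) =
      cascadeFunCalc a₁ a₂ a₃ g₁ g₂ fun μ => Real.exp (t * μ) := by
  rw [Acas_eq_cascadeFunCalc g₁ g₂ h₁₂ h₁₃ h₂₃, cascadeFunCalc,
    exp_smul_conj_diagonal (cascadeEigvecs_mul_inv g₁ g₂ h₁₂ h₁₃ h₂₃)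
      (cascadeEigvecsInv_mul g₁ g₂ h₁₂ h₁₃ h₂₃)]
  rfl

theorem inv_one_sub_cascadeFunCalc (h₁₂ : a₁ ≠ a₂) (h₁₃ : a₁ ≠ a₃) (h₂₃ : a₂ ≠ a₃)
    {f : ℝ → ℝ} (hf₁ : f (-a₁) ≠ 1) (hf₂ : f (-a₂) ≠ 1) (hf₃ : f (-a₃) ≠ 1) :
    (1 - cascadeFunCalc a₁ a₂ a₃ g₁ g₂ f)⁻¹ =
      cascadeFunCalc a₁ a₂ a₃ g₁ g₂ fun μ => (1 - f μ)⁻¹ := by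
  have hPQ := cascadeEigvecs_mul_inv g₁ g₂ h₁₂ h₁₃ h₂₃
  rw [cascadeFunCalc, one_sub_conj_diagonal hPQ,
    inv_conj_diagonal hPQ (cascadeEigvecsInv_mul g₁ g₂ h₁₂ h₁₃ h₂₃)]
  · rfl
  · intro i
    fin_cases i
    exacts [sub_ne_zero.2 hf₁.symm, sub_ne_zero.2 hf₂.symm, sub_ne_zero.2 hf₃.symm]

theorem cascadeFunCalc_mulVec_Bcas (h₁₂ : a₁ ≠ a₂) (h₁₃ : a₁ ≠ a₃) (h₂₃ : a₂ ≠ a₃) (f : ℝ → ℝ) :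
    (cascadeFunCalc a₁ a₂ a₃ g₁ g₂ f *ᵥ Bcas) 2 = g₁ * g₂ * divDiff2 f (-a₁) (-a₂) (-a₃) := by
  rw [cascadeFunCalc, cascadeEigvecs, cascadeEigvecsInv, Matrix.diagonal_fin_three,
    Matrix.mul_fin_three, Matrix.mul_fin_three]
  simp [Bcas, divDiff2, Matrix.mulVec, dotProduct, Fin.sum_univ_three, neg_add_eq_sub]
  field_simp
  ring

end Cascade

noncomputable def zfunDeriv (a₁ a₂ a₃ g₁ g₂ T τ : ℝ) : ℝ :=
  ((NormedSpace.exp (τ • Acas a₁ a₂ a₃ g₁ g₂) *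
    (1 - NormedSpace.exp (T • Acas a₁ a₂ a₃ g₁ g₂))⁻¹ * Acas a₁ a₂ a₃ g₁ g₂) *ᵥ Bcas) 2

section CascadeResponse

variable {a₁ a₂ a₃ g₁ g₂ T : ℝ}

theorem exp_mul_neg_ne_one (hT : T ≠ 0) {a : ℝ} (ha : a ≠ 0) : Real.exp (T * -a) ≠ 1 :=
  Real.exp_eq_one_iff _ |>.not.2 (mul_ne_zero hT (neg_ne_zero.2 ha))

theorem zfun_eq_divDiff2 (h₁₂ : a₁ ≠ a₂) (h₁₃ : a₁ ≠ a₃) (h₂₃ : a₂ ≠ a₃)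
    (ha₁ : a₁ ≠ 0) (ha₂ : a₂ ≠ 0) (ha₃ : a₃ ≠ 0) (hT : T ≠ 0) (τ : ℝ) :
    zfun a₁ a₂ a₃ g₁ g₂ τ T = g₁ * g₂ *
      divDiff2 (fun μ => Real.exp (τ * μ) * (1 - Real.exp (T * μ))⁻¹) (-a₁) (-a₂) (-a₃) := by
  rw [zfun, exp_smul_Acas g₁ g₂ h₁₂ h₁₃ h₂₃, exp_smul_Acas g₁ g₂ h₁₂ h₁₃ h₂₃,
    inv_one_sub_cascadeFunCalc g₁ g₂ h₁₂ h₁₃ h₂₃ (exp_mul_neg_ne_one hT ha₁)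
      (exp_mul_neg_ne_one hT ha₂) (exp_mul_neg_ne_one hT ha₃),
    cascadeFunCalc_mul g₁ g₂ h₁₂ h₁₃ h₂₃, cascadeFunCalc_mulVec_Bcas g₁ g₂ h₁₂ h₁₃ h₂₃]

theorem zfunDeriv_eq_divDiff2 (h₁₂ : a₁ ≠ a₂) (h₁₃ : a₁ ≠ a₃) (h₂₃ : a₂ ≠ a₃)
    (ha₁ : a₁ ≠ 0) (ha₂ : a₂ ≠ 0) (ha₃ : a₃ ≠ 0) (hT : T ≠ 0) (τ : ℝ) :
    zfunDeriv a₁ a₂ a₃ g₁ g₂ T τ = g₁ * g₂ *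
      divDiff2 (fun μ => Real.exp (τ * μ) * (μ / (1 - Real.exp (T * μ)))) (-a₁) (-a₂) (-a₃) := by
  rw [zfunDeriv, exp_smul_Acas g₁ g₂ h₁₂ h₁₃ h₂₃, exp_smul_Acas g₁ g₂ h₁₂ h₁₃ h₂₃,
    inv_one_sub_cascadeFunCalc g₁ g₂ h₁₂ h₁₃ h₂₃ (exp_mul_neg_ne_one hT ha₁)
      (exp_mul_neg_ne_one hT ha₂) (exp_mul_neg_ne_one hT ha₃),
    Acas_eq_cascadeFunCalc g₁ g₂ h₁₂ h₁₃ h₂₃, cascadeFunCalc_mul g₁ g₂ h₁₂ h₁₃ h₂₃,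
    cascadeFunCalc_mul g₁ g₂ h₁₂ h₁₃ h₂₃, cascadeFunCalc_mulVec_Bcas g₁ g₂ h₁₂ h₁₃ h₂₃]
  congr 2 with μ
  ring

theorem hasDerivAt_zfun (h₁₂ : a₁ ≠ a₂) (h₁₃ : a₁ ≠ a₃) (h₂₃ : a₂ ≠ a₃)
    (ha₁ : a₁ ≠ 0) (ha₂ : a₂ ≠ 0) (ha₃ : a₃ ≠ 0) (hT : T ≠ 0) (τ : ℝ) :
    HasDerivAt (fun τ => zfun a₁ a₂ a₃ g₁ g₂ τ T) (zfunDeriv a₁ a₂ a₃ g₁ g₂ T τ) τ := by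
  simp only [zfun_eq_divDiff2 h₁₂ h₁₃ h₂₃ ha₁ ha₂ ha₃ hT,
    zfunDeriv_eq_divDiff2 h₁₂ h₁₃ h₂₃ ha₁ ha₂ ha₃ hT]
  refine (hasDerivAt_divDiff2 (F := fun τ μ => Real.exp (τ * μ) * (1 - Real.exp (T * μ))⁻¹)
    (F' := fun τ μ => Real.exp (τ * μ) * (μ / (1 - Real.exp (T * μ)))) fun μ => ?_).const_mul _
  exact (((hasDerivAt_id' τ).mul_const μ).exp.mul_const _).congr_deriv (by ring)

theorem continuous_zfunDeriv (h₁₂ : a₁ ≠ a₂) (h₁₃ : a₁ ≠ a₃) (h₂₃ : a₂ ≠ a₃)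
    (ha₁ : a₁ ≠ 0) (ha₂ : a₂ ≠ 0) (ha₃ : a₃ ≠ 0) (hT : T ≠ 0) :
    Continuous (zfunDeriv a₁ a₂ a₃ g₁ g₂ T) := by
  rw [funext (zfunDeriv_eq_divDiff2 h₁₂ h₁₃ h₂₃ ha₁ ha₂ ha₃ hT)]
  unfold divDiff2
  fun_prop

theorem zfun_self_eq_zfun_zero (h₁₂ : a₁ ≠ a₂) (h₁₃ : a₁ ≠ a₃) (h₂₃ : a₂ ≠ a₃)
    (ha₁ : a₁ ≠ 0) (ha₂ : a₂ ≠ 0) (ha₃ : a₃ ≠ 0) (hT : T ≠ 0) :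
    zfun a₁ a₂ a₃ g₁ g₂ T T = zfun a₁ a₂ a₃ g₁ g₂ 0 T := by
  have key : ∀ a ≠ 0, Real.exp (T * -a) * (1 - Real.exp (T * -a))⁻¹ =
      Real.exp (0 * -a) * (1 - Real.exp (T * -a))⁻¹ + (0 * -a + -1) := fun a ha => by
    have := sub_ne_zero.2 (exp_mul_neg_ne_one hT ha).symm
    rw [zero_mul, Real.exp_zero]
    generalize Real.exp (T * -a) = E at this ⊢
    field_simp
    ring
  rw [zfun_eq_divDiff2 h₁₂ h₁₃ h₂₃ ha₁ ha₂ ha₃ hT, zfun_eq_divDiff2 h₁₂ h₁₃ h₂₃ ha₁ ha₂ ha₃ hT,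
    divDiff2_eq_of_eq_add_affine (g := fun μ => Real.exp (0 * μ) * (1 - Real.exp (T * μ))⁻¹)
      (neg_injective.ne h₁₂) (neg_injective.ne h₁₃) (neg_injective.ne h₂₃)
      (key a₁ ha₁) (key a₂ ha₂) (key a₃ ha₃)]

theorem zfunDeriv_self (h₁₂ : a₁ ≠ a₂) (h₁₃ : a₁ ≠ a₃) (h₂₃ : a₂ ≠ a₃)
    (ha₁ : a₁ ≠ 0) (ha₂ : a₂ ≠ 0) (ha₃ : a₃ ≠ 0) (hT : T ≠ 0) :
    zfunDeriv a₁ a₂ a₃ g₁ g₂ T T = zfunDeriv a₁ a₂ a₃ g₁ g₂ T 0 := by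
  have key : ∀ a ≠ 0, Real.exp (T * -a) * (-a / (1 - Real.exp (T * -a))) =
      Real.exp (0 * -a) * (-a / (1 - Real.exp (T * -a))) + (-1 * -a + 0) := fun a ha => by
    have := sub_ne_zero.2 (exp_mul_neg_ne_one hT ha).symm
    rw [zero_mul, Real.exp_zero]
    generalize Real.exp (T * -a) = E at this ⊢
    field_simp
    ring
  rw [zfunDeriv_eq_divDiff2 h₁₂ h₁₃ h₂₃ ha₁ ha₂ ha₃ hT,
    zfunDeriv_eq_divDiff2 h₁₂ h₁₃ h₂₃ ha₁ ha₂ ha₃ hT,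
    divDiff2_eq_of_eq_add_affine
      (g := fun μ => Real.exp (0 * μ) * (μ / (1 - Real.exp (T * μ))))
      (neg_injective.ne h₁₂) (neg_injective.ne h₁₃) (neg_injective.ne h₂₃)
      (key a₁ ha₁) (key a₂ ha₂) (key a₃ ha₃)]

theorem zfunDeriv_zero_neg (h₁₂ : a₁ ≠ a₂) (h₁₃ : a₁ ≠ a₃) (h₂₃ : a₂ ≠ a₃)
    (ha₁ : 0 < a₁) (ha₂ : 0 < a₂) (ha₃ : 0 < a₃) (hg₁ : 0 < g₁) (hg₂ : 0 < g₂) (hT : 0 < T) :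
    zfunDeriv a₁ a₂ a₃ g₁ g₂ T 0 < 0 := by
  rw [zfunDeriv_eq_divDiff2 h₁₂ h₁₃ h₂₃ ha₁.ne' ha₂.ne' ha₃.ne' hT.ne']
  simp only [zero_mul, Real.exp_zero, one_mul]
  exact mul_neg_of_pos_of_neg (mul_pos hg₁ hg₂) <|
    (strictConcaveOn_div_one_sub_exp hT).divDiff2_neg (neg_lt_zero.2 ha₁)
      (neg_lt_zero.2 ha₂) (neg_lt_zero.2 ha₃) (neg_injective.ne h₁₂) (neg_injective.ne h₁₃)
      (neg_injective.ne h₂₃)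

theorem zfunDeriv_eq_zero_of_three_zeros (h₁₂ : a₁ ≠ a₂) (h₁₃ : a₁ ≠ a₃) (h₂₃ : a₂ ≠ a₃)
    (ha₁ : a₁ ≠ 0) (ha₂ : a₂ ≠ 0) (ha₃ : a₃ ≠ 0) (hT : T ≠ 0) {p q r : ℝ} (hpq : p < q)
    (hqr : q < r) (hp : zfunDeriv a₁ a₂ a₃ g₁ g₂ T p = 0)
    (hq : zfunDeriv a₁ a₂ a₃ g₁ g₂ T q = 0) (hr : zfunDeriv a₁ a₂ a₃ g₁ g₂ T r = 0) (τ : ℝ) :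
    zfunDeriv a₁ a₂ a₃ g₁ g₂ T τ = 0 := by
  simp only [zfunDeriv_eq_divDiff2 h₁₂ h₁₃ h₂₃ ha₁ ha₂ ha₃ hT] at hp hq hr ⊢
  rcases eq_or_ne (g₁ * g₂) 0 with hg | hg
  · rw [hg, zero_mul]
  exact mul_eq_zero_of_right _ <| divDiff2_exp_mul_eq_zero_of_three_zeros
    (neg_injective.ne h₁₂) (neg_injective.ne h₁₃) (neg_injective.ne h₂₃) hpq hqr
    ((mul_eq_zero.1 hp).resolve_left hg) ((mul_eq_zero.1 hq).resolve_left hg)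
    ((mul_eq_zero.1 hr).resolve_left hg) τ

end CascadeResponse

theorem z_two_interior_extrema (a₁ a₂ a₃ g₁ g₂ : ℝ)
    (ha₁ : 0 < a₁) (ha₂ : 0 < a₂) (ha₃ : 0 < a₃)
    (h₁₂ : a₁ ≠ a₂) (h₁₃ : a₁ ≠ a₃) (h₂₃ : a₂ ≠ a₃)
    (hg₁ : 0 < g₁) (hg₂ : 0 < g₂) (T : ℝ) (hT : 0 < T) :
    ∃ τ₁ τ₂ : ℝ, 0 < τ₁ ∧ τ₁ < τ₂ ∧ τ₂ < T ∧
      {τ : ℝ | τ ∈ Set.Ioo 0 T ∧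
        ((NormedSpace.exp (τ • Acas a₁ a₂ a₃ g₁ g₂) *
          (1 - NormedSpace.exp (T • Acas a₁ a₂ a₃ g₁ g₂))⁻¹ *
          Acas a₁ a₂ a₃ g₁ g₂) *ᵥ Bcas) 2 = 0} = {τ₁, τ₂} ∧
      StrictAntiOn (fun τ => zfun a₁ a₂ a₃ g₁ g₂ τ T) (Set.Icc 0 τ₁) ∧
      StrictMonoOn (fun τ => zfun a₁ a₂ a₃ g₁ g₂ τ T) (Set.Icc τ₁ τ₂) ∧
      StrictAntiOn (fun τ => zfun a₁ a₂ a₃ g₁ g₂ τ T) (Set.Icc τ₂ T) ∧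
      IsMinOn (fun τ => zfun a₁ a₂ a₃ g₁ g₂ τ T) (Set.Icc 0 T) τ₁ ∧
      IsMaxOn (fun τ => zfun a₁ a₂ a₃ g₁ g₂ τ T) (Set.Icc 0 T) τ₂ := by
  have hψ₀ := zfunDeriv_zero_neg h₁₂ h₁₃ h₂₃ ha₁ ha₂ ha₃ hg₁ hg₂ hT
  exact exists_two_critical_points_of_eq hT
    (hasDerivAt_zfun h₁₂ h₁₃ h₂₃ ha₁.ne' ha₂.ne' ha₃.ne' hT.ne')
    (continuous_zfunDeriv h₁₂ h₁₃ h₂₃ ha₁.ne' ha₂.ne' ha₃.ne' hT.ne')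
    (zfun_self_eq_zfun_zero h₁₂ h₁₃ h₂₃ ha₁.ne' ha₂.ne' ha₃.ne' hT.ne').symm hψ₀
    ((zfunDeriv_self h₁₂ h₁₃ h₂₃ ha₁.ne' ha₂.ne' ha₃.ne' hT.ne').trans_lt hψ₀)
    fun p q r _ hpq hqr _ hp hq hr => hψ₀.ne <|
      zfunDeriv_eq_zero_of_three_zeros h₁₂ h₁₃ h₂₃ ha₁.ne' ha₂.ne' ha₃.ne' hT.ne' hpq hqr hp hq hr 0
end

section
/- As T → ∞, z(τ,T) = Ce^{Aτ}(I - e^{AT})^{-1}B converges to the impulse response g(τ) = Ce^{Aτ}B uniformly in τ on any compact interval [0,M]. Consequently z_min(T) = z(τ₁(T),T) → 0 and z_max(T) = z(τ₂(T),T) → g(t*) as T → ∞, where t* is the unique maximizer of g. -/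
open Matrix Set Filter

/-!
The cascade matrix `A` is lower triangular with the distinct eigenvalues `-a₁, -a₂, -a₃ < 0`, so
it is diagonalised by some `P`, and then
`e^{τA} (1 - e^{TA})⁻¹ - e^{τA} = P diag (e^{-aᵢτ} e^{-aᵢT} / (1 - e^{-aᵢT})) P⁻¹`.
For `τ ≥ 0` the entries of this matrix are bounded by a quantity that depends only on `T` and
tends to `0`, so `z(·, T) → g` uniformly on all of `[0, ∞)`.

Uniform convergence carries extreme values along: `z(τ₂(T), T)` lies between `z(t*, T)` and
`g(τ₂(T)) + ε ≤ g(t*) + ε`, and symmetrically for the minimum, which goes to `min g = g(0) = 0`.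
That `g ≥ 0` comes from `A` having nonnegative off-diagonal entries: `tA + ctI` is then entrywise
nonnegative for large `c`, hence so are its exponential series and `e^{tA} = e^{-ct} e^{tA + ctI}`.
-/

open scoped Topology

theorem tendstoUniformlyOn_of_dist_le {ι α β : Type*} [PseudoMetricSpace β] {l : Filter ι}
    {F : ι → α → β} {f : α → β} {s : Set α} {ε : ι → ℝ} (hε : Tendsto ε l (𝓝 0))
    (h : ∀ᶠ i in l, ∀ x ∈ s, dist (f x) (F i x) ≤ ε i) : TendstoUniformlyOn F f l s :=
  Metric.tendstoUniformlyOn_iff.2 fun _ hδ =>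
    (h.and (hε.eventually (gt_mem_nhds hδ))).mono fun _ hi x hx => (hi.1 x hx).trans_lt hi.2

section ExtremeValues

variable {ι α : Type*} {l : Filter ι} {F : ι → α → ℝ} {g : α → ℝ} {S : Set α} {s : ι → Set α}
  {x : ι → α} {a : α}

theorem tendsto_apply_isMaxOn_of_tendstoUniformlyOn (hF : TendstoUniformlyOn F g l S)
    (hsS : ∀ᶠ i in l, s i ⊆ S) (ha : ∀ᶠ i in l, a ∈ s i)
    (hx : ∀ᶠ i in l, x i ∈ s i ∧ IsMaxOn (F i) (s i) (x i)) (hg : IsMaxOn g S a) :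
    Tendsto (fun i => F i (x i)) l (𝓝 (g a)) := by
  refine Metric.tendsto_nhds.2 fun ε hε => ?_
  filter_upwards [Metric.tendstoUniformlyOn_iff.1 hF ε hε, hsS, ha, hx]
    with i hclose hsub hai ⟨hxi, hmax⟩
  have h_at_a := hclose a (hsub hai)
  have h_at_x := hclose (x i) (hsub hxi)
  have hFa : F i a ≤ F i (x i) := hmax hai
  have hgx : g (x i) ≤ g a := hg (hsub hxi)
  rw [Real.dist_eq, abs_lt] at h_at_a h_at_x ⊢
  constructor <;> linarith

theorem tendsto_apply_isMinOn_of_tendstoUniformlyOn (hF : TendstoUniformlyOn F g l S)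
    (hsS : ∀ᶠ i in l, s i ⊆ S) (ha : ∀ᶠ i in l, a ∈ s i)
    (hx : ∀ᶠ i in l, x i ∈ s i ∧ IsMinOn (F i) (s i) (x i)) (hg : IsMinOn g S a) :
    Tendsto (fun i => F i (x i)) l (𝓝 (g a)) := by
  simpa using (tendsto_apply_isMaxOn_of_tendstoUniformlyOn hF.neg hsS ha
    (hx.mono fun _ hi => ⟨hi.1, hi.2.neg⟩) hg.neg).neg

end ExtremeValues

namespace Matrix

variable {n : Type*} [Fintype n] [DecidableEq n]

theorem exp_apply_nonneg {P : Matrix n n ℝ} (hP : ∀ i j, 0 ≤ P i j) (i j : n) :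
    0 ≤ NormedSpace.exp P i j := by
  rw [congrFun (NormedSpace.exp_eq_tsum ℝ) P]
  by_cases hs : Summable fun k : ℕ => ((k.factorial : ℝ)⁻¹) • P ^ k
  · exact hasSum_le (fun k => mul_nonneg (by positivity) (pow_apply_nonneg hP k i j)) hasSum_zero
      (Pi.hasSum.mp (Pi.hasSum.mp hs.hasSum i) j)
  · rw [tsum_eq_zero_of_not_summable hs]
    rfl

theorem exp_smul_one (c : ℝ) :
    NormedSpace.exp (c • (1 : Matrix n n ℝ)) = diagonal fun _ => Real.exp c := by
  rw [smul_one_eq_diagonal, exp_diagonal, Pi.exp_def, Real.exp_eq_exp_ℝ]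

theorem exp_smul_apply_nonneg_of_offDiag_nonneg {A : Matrix n n ℝ}
    (hA : ∀ i j, i ≠ j → 0 ≤ A i j) {t : ℝ} (ht : 0 ≤ t) (i j : n) :
    0 ≤ NormedSpace.exp (t • A) i j := by
  set c := ∑ k, |A k k|
  have hshift : ∀ i j, 0 ≤ (t • A + (t * c) • (1 : Matrix n n ℝ)) i j := by
    intro i j
    rcases eq_or_ne i j with rfl | hij
    · have : -A i i ≤ c := (neg_le_abs _).trans
        (Finset.single_le_sum (fun k _ => abs_nonneg (A k k)) (Finset.mem_univ i))
      simp only [add_apply, smul_apply, smul_eq_mul, one_apply_eq, mul_one]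
      nlinarith
    · simpa [one_apply_ne hij] using mul_nonneg ht (hA i j hij)
  have hsplit : t • A = (t • A + (t * c) • 1) + (-(t * c)) • 1 := by
    rw [neg_smul, add_neg_cancel_right]
  rw [hsplit, exp_add_of_commute _ _ ((Commute.one_right _).smul_right _), exp_smul_one,
    mul_diagonal]
  exact mul_nonneg (exp_apply_nonneg hshift i j) (Real.exp_pos _).le

variable {P : Matrix n n ℝ}

theorem conj_diagonal_apply (v : n → ℝ) (k l : n) :
    (P * diagonal v * P⁻¹) k l = ∑ i, P k i * v i * P⁻¹ i l := by
  rw [mul_apply]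
  simp only [mul_diagonal]

theorem conj_diagonal_mul_conj_diagonal (hP : IsUnit P.det) (u v : n → ℝ) :
    P * diagonal u * P⁻¹ * (P * diagonal v * P⁻¹) = P * diagonal (u * v) * P⁻¹ := by
  calc P * diagonal u * P⁻¹ * (P * diagonal v * P⁻¹)
      = P * diagonal u * (P⁻¹ * P) * diagonal v * P⁻¹ := by simp only [Matrix.mul_assoc]
    _ = P * diagonal (u * v) * P⁻¹ := by
      rw [nonsing_inv_mul _ hP, Matrix.mul_one, Matrix.mul_assoc P, diagonal_mul_diagonal]
      rfl

theorem exp_smul_conj_diagonal (hP : IsUnit P.det) (d : n → ℝ) (t : ℝ) :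
    NormedSpace.exp (t • (P * diagonal d * P⁻¹)) =
      P * diagonal (fun i => Real.exp (t * d i)) * P⁻¹ := by
  rw [← smul_mul_assoc, ← mul_smul_comm, ← diagonal_smul,
    exp_conj _ _ ((isUnit_iff_isUnit_det P).2 hP), exp_diagonal, Pi.exp_def, Real.exp_eq_exp_ℝ]
  rfl

theorem inv_one_sub_conj_diagonal (hP : IsUnit P.det) {v : n → ℝ} (hv : ∀ i, v i ≠ 1) :
    (1 - P * diagonal v * P⁻¹)⁻¹ = P * diagonal (fun i => (1 - v i)⁻¹) * P⁻¹ := by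
  have hdiag : diagonal (1 - v) = 1 - diagonal v := by
    rw [← diagonal_one, diagonal_sub]
    rfl
  have hconj : 1 - P * diagonal v * P⁻¹ = P * diagonal (1 - v) * P⁻¹ := by
    rw [hdiag, Matrix.mul_sub, Matrix.sub_mul, Matrix.mul_one, mul_nonsing_inv _ hP]
  have hinv : (1 - v) * (fun i => (1 - v i)⁻¹) = 1 :=
    funext fun i => mul_inv_cancel₀ (sub_ne_zero.2 (hv i).symm)
  rw [hconj]
  apply inv_eq_right_inv
  rw [conj_diagonal_mul_conj_diagonal hP, hinv, show diagonal (1 : n → ℝ) = 1 from diagonal_one,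
    Matrix.mul_one, mul_nonsing_inv _ hP]

theorem abs_sub_mul_inv_one_sub_le {p q x y : ℝ} (hx₀ : 0 ≤ x) (hx₁ : x ≤ 1) (hy₀ : 0 ≤ y)
    (hy₁ : y < 1) :
    |p * x * q - p * (x * (1 - y)⁻¹) * q| ≤ |p| * |q| * ((1 - y)⁻¹ - 1) := by
  have hgain : 0 ≤ (1 - y)⁻¹ - 1 := sub_nonneg.2 ((one_le_inv₀ (by linarith)).2 (by linarith))
  calc |p * x * q - p * (x * (1 - y)⁻¹) * q| = |p| * |q| * (x * ((1 - y)⁻¹ - 1)) := by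
        rw [← abs_of_nonneg (mul_nonneg hx₀ hgain), ← abs_mul, ← abs_mul, ← abs_neg]
        ring_nf
    _ ≤ |p| * |q| * ((1 - y)⁻¹ - 1) := by
        gcongr
        exact mul_le_of_le_one_left hgain hx₁

theorem tendstoUniformlyOn_exp_smul_mul_inv_one_sub_exp_smul (hP : IsUnit P.det) {d : n → ℝ}
    (hd : ∀ i, d i < 0) (k l : n) :
    TendstoUniformlyOn
      (fun (T τ : ℝ) => (NormedSpace.exp (τ • (P * diagonal d * P⁻¹)) *
        (1 - NormedSpace.exp (T • (P * diagonal d * P⁻¹)))⁻¹) k l)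
      (fun τ : ℝ => NormedSpace.exp (τ • (P * diagonal d * P⁻¹)) k l) atTop (Ici 0) := by
  have hexp_lt : ∀ T : ℝ, 0 < T → ∀ i, Real.exp (T * d i) < 1 := fun T hT i =>
    Real.exp_lt_one_iff.2 (mul_neg_of_pos_of_neg hT (hd i))
  have hexp : ∀ i, Tendsto (fun T => Real.exp (T * d i)) atTop (𝓝 0) := fun i =>
    Real.tendsto_exp_atBot.comp (tendsto_id.atTop_mul_const_of_neg (hd i))
  refine tendstoUniformlyOn_of_dist_le
    (ε := fun T => ∑ i, |P k i| * |P⁻¹ i l| * ((1 - Real.exp (T * d i))⁻¹ - 1)) ?_ ?_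
  · simpa using tendsto_finsetSum Finset.univ fun i _ =>
      ((((hexp i).const_sub 1).inv₀ (by norm_num : (1 : ℝ) - 0 ≠ 0)).sub_const 1).const_mul
        (|P k i| * |P⁻¹ i l|)
  filter_upwards [eventually_gt_atTop 0] with T hT τ hτ
  rw [exp_smul_conj_diagonal hP, exp_smul_conj_diagonal hP,
    inv_one_sub_conj_diagonal hP fun i => (hexp_lt T hT i).ne, conj_diagonal_mul_conj_diagonal hP,
    conj_diagonal_apply, conj_diagonal_apply, Real.dist_eq, ← Finset.sum_sub_distrib]
  refine (Finset.abs_sum_le_sum_abs _ _).trans (Finset.sum_le_sum fun i _ => ?_)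
  exact abs_sub_mul_inv_one_sub_le (Real.exp_pos _).le
    (Real.exp_le_one_iff.2 (mul_nonpos_of_nonneg_of_nonpos hτ (hd i).le))
    (Real.exp_pos _).le (hexp_lt T hT i)

end Matrix

noncomputable def cascadeEigenbasis (a₁ a₂ a₃ g₁ g₂ : ℝ) : Matrix (Fin 3) (Fin 3) ℝ :=
  !![1, 0, 0; g₁ / (a₂ - a₁), 1, 0; g₁ * g₂ / ((a₂ - a₁) * (a₃ - a₁)), g₂ / (a₃ - a₂), 1]

theorem det_cascadeEigenbasis (a₁ a₂ a₃ g₁ g₂ : ℝ) :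
    (cascadeEigenbasis a₁ a₂ a₃ g₁ g₂).det = 1 := by
  simp [cascadeEigenbasis, det_fin_three]

theorem Acas_eq_conj_diagonal {a₁ a₂ a₃ : ℝ} (h₁₂ : a₁ ≠ a₂) (h₁₃ : a₁ ≠ a₃) (h₂₃ : a₂ ≠ a₃)
    (g₁ g₂ : ℝ) :
    Acas a₁ a₂ a₃ g₁ g₂ = cascadeEigenbasis a₁ a₂ a₃ g₁ g₂ * diagonal ![-a₁, -a₂, -a₃] *
      (cascadeEigenbasis a₁ a₂ a₃ g₁ g₂)⁻¹ := by
  have h21 : a₂ - a₁ ≠ 0 := sub_ne_zero.2 h₁₂.symm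
  have h31 : a₃ - a₁ ≠ 0 := sub_ne_zero.2 h₁₃.symm
  have h32 : a₃ - a₂ ≠ 0 := sub_ne_zero.2 h₂₃.symm
  have heig : Acas a₁ a₂ a₃ g₁ g₂ * cascadeEigenbasis a₁ a₂ a₃ g₁ g₂ =
      cascadeEigenbasis a₁ a₂ a₃ g₁ g₂ * diagonal ![-a₁, -a₂, -a₃] := by
    ext i j
    fin_cases i <;> fin_cases j <;>
      simp [Acas, cascadeEigenbasis, mul_apply, Fin.sum_univ_three] <;> field_simp <;> ring
  rw [← heig, mul_nonsing_inv_cancel_right _ _ (by simp [det_cascadeEigenbasis])]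

theorem mulVec_Bcas_apply (M : Matrix (Fin 3) (Fin 3) ℝ) (i : Fin 3) : (M *ᵥ Bcas) i = M i 0 := by
  simp [mulVec, dotProduct, Fin.sum_univ_three, Bcas]

theorem tendstoUniformlyOn_zfun {a₁ a₂ a₃ : ℝ} (ha₁ : 0 < a₁) (ha₂ : 0 < a₂) (ha₃ : 0 < a₃)
    (h₁₂ : a₁ ≠ a₂) (h₁₃ : a₁ ≠ a₃) (h₂₃ : a₂ ≠ a₃) (g₁ g₂ : ℝ) :
    TendstoUniformlyOn (fun T τ => zfun a₁ a₂ a₃ g₁ g₂ τ T) (impResp a₁ a₂ a₃ g₁ g₂) atTop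
      (Ici 0) := by
  have hneg : ∀ i, ![-a₁, -a₂, -a₃] i < 0 := by
    intro i
    fin_cases i <;> simp [ha₁, ha₂, ha₃]
  have h := tendstoUniformlyOn_exp_smul_mul_inv_one_sub_exp_smul
    (by simp [det_cascadeEigenbasis] : IsUnit (cascadeEigenbasis a₁ a₂ a₃ g₁ g₂).det) hneg 2 0
  rw [← Acas_eq_conj_diagonal h₁₂ h₁₃ h₂₃] at h
  show TendstoUniformlyOn _ (fun t => impResp a₁ a₂ a₃ g₁ g₂ t) _ _
  simpa only [zfun, impResp, mulVec_Bcas_apply] using h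

theorem impResp_nonneg {a₁ a₂ a₃ g₁ g₂ : ℝ} (hg₁ : 0 ≤ g₁) (hg₂ : 0 ≤ g₂) {t : ℝ} (ht : 0 ≤ t) :
    0 ≤ impResp a₁ a₂ a₃ g₁ g₂ t := by
  rw [impResp, mulVec_Bcas_apply]
  refine exp_smul_apply_nonneg_of_offDiag_nonneg (fun i j hij => ?_) ht 2 0
  fin_cases i <;> fin_cases j <;> simp_all [Acas]

theorem impResp_zero (a₁ a₂ a₃ g₁ g₂ : ℝ) : impResp a₁ a₂ a₃ g₁ g₂ 0 = 0 := by
  simp [impResp, mulVec_Bcas_apply]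

theorem z_limits_at_infinity_general (a₁ a₂ a₃ g₁ g₂ : ℝ)
    (ha₁ : 0 < a₁) (ha₂ : 0 < a₂) (ha₃ : 0 < a₃)
    (h₁₂ : a₁ ≠ a₂) (h₁₃ : a₁ ≠ a₃) (h₂₃ : a₂ ≠ a₃)
    (hg₁ : 0 < g₁) (hg₂ : 0 < g₂)
    (τ₁ τ₂ : ℝ → ℝ)
    (hτ₁ : ∀ T : ℝ, 0 < T → τ₁ T ∈ Set.Icc 0 T ∧
      IsMinOn (fun τ => zfun a₁ a₂ a₃ g₁ g₂ τ T) (Set.Icc 0 T) (τ₁ T))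
    (hτ₂ : ∀ T : ℝ, 0 < T → τ₂ T ∈ Set.Icc 0 T ∧
      IsMaxOn (fun τ => zfun a₁ a₂ a₃ g₁ g₂ τ T) (Set.Icc 0 T) (τ₂ T))
    (tstar : ℝ) (hstar : 0 < tstar)
    (hpeak : ∀ t ∈ Set.Ici (0:ℝ), impResp a₁ a₂ a₃ g₁ g₂ t ≤ impResp a₁ a₂ a₃ g₁ g₂ tstar) :
    (∀ M : ℝ, 0 < M →
      TendstoUniformlyOn (fun T τ => zfun a₁ a₂ a₃ g₁ g₂ τ T)
        (impResp a₁ a₂ a₃ g₁ g₂) Filter.atTop (Set.Icc 0 M)) ∧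
    Filter.Tendsto (fun T => zfun a₁ a₂ a₃ g₁ g₂ (τ₁ T) T) Filter.atTop (nhds 0) ∧
    Filter.Tendsto (fun T => zfun a₁ a₂ a₃ g₁ g₂ (τ₂ T) T) Filter.atTop
      (nhds (impResp a₁ a₂ a₃ g₁ g₂ tstar)) := by
  have hz := tendstoUniformlyOn_zfun ha₁ ha₂ ha₃ h₁₂ h₁₃ h₂₃ g₁ g₂
  have hsub : ∀ᶠ T in atTop, Icc (0 : ℝ) T ⊆ Ici 0 := univ_mem' fun _ => Icc_subset_Ici_self
  have hmin : IsMinOn (impResp a₁ a₂ a₃ g₁ g₂) (Ici 0) 0 := fun t ht => by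
    simpa [impResp_zero] using impResp_nonneg (a₁ := a₁) (a₂ := a₂) (a₃ := a₃) hg₁.le hg₂.le ht
  refine ⟨fun M _ => hz.mono Icc_subset_Ici_self, ?_, ?_⟩
  · simpa only [impResp_zero] using tendsto_apply_isMinOn_of_tendstoUniformlyOn
      (F := fun T τ => zfun a₁ a₂ a₃ g₁ g₂ τ T) hz hsub
      ((eventually_ge_atTop 0).mono fun T hT => left_mem_Icc.2 hT)
      ((eventually_gt_atTop 0).mono hτ₁) hmin
  · exact tendsto_apply_isMaxOn_of_tendstoUniformlyOn
      (F := fun T τ => zfun a₁ a₂ a₃ g₁ g₂ τ T) hz hsub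
      ((eventually_ge_atTop tstar).mono fun T hT => ⟨hstar.le, hT⟩)
      ((eventually_gt_atTop 0).mono hτ₂) hpeak

theorem z_limits_at_infinity (a₁ a₂ a₃ g₁ g₂ : ℝ)
    (ha₁ : 0 < a₁) (ha₂ : 0 < a₂) (ha₃ : 0 < a₃)
    (h₁₂ : a₁ ≠ a₂) (h₁₃ : a₁ ≠ a₃) (h₂₃ : a₂ ≠ a₃)
    (hg₁ : 0 < g₁) (hg₂ : 0 < g₂)
    (τ₁ τ₂ : ℝ → ℝ)
    (hτ₁ : ∀ T : ℝ, 0 < T → τ₁ T ∈ Set.Icc 0 T ∧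
      IsMinOn (fun τ => zfun a₁ a₂ a₃ g₁ g₂ τ T) (Set.Icc 0 T) (τ₁ T))
    (hτ₂ : ∀ T : ℝ, 0 < T → τ₂ T ∈ Set.Icc 0 T ∧
      IsMaxOn (fun τ => zfun a₁ a₂ a₃ g₁ g₂ τ T) (Set.Icc 0 T) (τ₂ T))
    (tstar : ℝ) (hstar : 0 < tstar)
    (hpeak : ∀ t ∈ Set.Ici (0:ℝ), impResp a₁ a₂ a₃ g₁ g₂ t ≤ impResp a₁ a₂ a₃ g₁ g₂ tstar)
    (huniq : ∀ t ∈ Set.Ici (0:ℝ),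
      (∀ s ∈ Set.Ici (0:ℝ), impResp a₁ a₂ a₃ g₁ g₂ s ≤ impResp a₁ a₂ a₃ g₁ g₂ t) → t = tstar) :
    (∀ M : ℝ, 0 < M →
      TendstoUniformlyOn (fun T τ => zfun a₁ a₂ a₃ g₁ g₂ τ T)
        (impResp a₁ a₂ a₃ g₁ g₂) Filter.atTop (Set.Icc 0 M)) ∧
    Filter.Tendsto (fun T => zfun a₁ a₂ a₃ g₁ g₂ (τ₁ T) T) Filter.atTop (nhds 0) ∧
    Filter.Tendsto (fun T => zfun a₁ a₂ a₃ g₁ g₂ (τ₂ T) T) Filter.atTop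
      (nhds (impResp a₁ a₂ a₃ g₁ g₂ tstar)) :=
  z_limits_at_infinity_general a₁ a₂ a₃ g₁ g₂ ha₁ ha₂ ha₃ h₁₂ h₁₃ h₂₃ hg₁ hg₂ τ₁ τ₂ hτ₁ hτ₂ tstar
    hstar hpeak
end
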